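/- arXiv:2407.11241 — 3 statements merged into one kernel-verified Lean document; each statement's English description precedes it below -/
import Mathlib

section
/- For nonnegative integers m, n with n ≥ 1, the orthogonality relation ∫_0^∞ s^m L^m_{n-1}(s)^2 e^{-s} ds = Γ(m+n)/(n-1)! holds, where L^m_{n-1} is the associated Laguerre polynomial of degree n-1. -/
open Finset PowerSeries MeasureTheory

lemma coeff_one_sub_pow (N p : ℕ) :
    (PowerSeries.coeff p) ((1 - PowerSeries.X) ^ N) = (-1 : ℤ) ^ p * N.choose p := by
  have h : ((1 - PowerSeries.X : ℤ⟦X⟧)) ^ N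
      = ∑ i ∈ range (N + 1),
          (PowerSeries.C ((-1 : ℤ) ^ i * (N.choose i : ℤ))) * (PowerSeries.X : ℤ⟦X⟧) ^ i := by
    rw [sub_eq_add_neg, add_comm, add_pow]
    refine Finset.sum_congr rfl fun i hi => ?_
    rw [neg_pow, one_pow, mul_one, map_mul, map_pow, map_neg, map_one, map_natCast]
    ring
  rw [h, map_sum]
  simp only [PowerSeries.coeff_C_mul, PowerSeries.coeff_X_pow]
  by_cases hp : p ≤ N
  · rw [Finset.sum_eq_single p]
    · simp
    · intro i _ hip; simp [show p ≠ i from fun h => hip h.symm]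
    · intro hmem; exact absurd (Finset.mem_range.2 (Nat.lt_succ_of_le hp)) hmem
  · rw [Nat.choose_eq_zero_of_lt (by omega)]
    rw [Finset.sum_eq_zero]
    · simp
    · intro i hi
      have : p ≠ i := by simp at hi; omega
      simp [this]

lemma comb (m k j : ℕ) (hj : j ≤ k) :
    ∑ l ∈ Finset.range (k + 1),
        (-1 : ℤ) ^ l * ((k + m).choose (k - l)) * ((m + j + l).choose l)
      = if j = k then (-1) ^ k else 0 := by
  set F : ℤ⟦X⟧ := (1 - PowerSeries.X) ^ (k + m) with hF
  set G : ℤ⟦X⟧ := (PowerSeries.invOneSubPow ℤ (m + j + 1)).val with hG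
  have hprod : F * G = (1 - PowerSeries.X) ^ (k - j) * (PowerSeries.invOneSubPow ℤ 1).val := by
    have hne : ((1 - PowerSeries.X : ℤ⟦X⟧)) ^ (m + j + 1) ≠ 0 := by
      apply pow_ne_zero
      intro h
      have := congrArg (PowerSeries.coeff 0) h
      simp at this
    apply mul_left_cancel₀ hne
    have h1 : ((1 - PowerSeries.X : ℤ⟦X⟧)) ^ (m + j + 1) * G = 1 := by
      rw [hG, ← PowerSeries.invOneSubPow_inv_eq_one_sub_pow]
      exact (PowerSeries.invOneSubPow ℤ (m + j + 1)).inv_val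
    have h2 : ((1 - PowerSeries.X : ℤ⟦X⟧)) ^ 1 * (PowerSeries.invOneSubPow ℤ 1).val = 1 := by
      rw [← PowerSeries.invOneSubPow_inv_eq_one_sub_pow]
      exact (PowerSeries.invOneSubPow ℤ 1).inv_val
    calc (1 - PowerSeries.X : ℤ⟦X⟧) ^ (m + j + 1) * (F * G)
        = F * ((1 - PowerSeries.X) ^ (m + j + 1) * G) := by ring
      _ = F := by rw [h1, mul_one]
      _ = (1 - PowerSeries.X) ^ (m + j) * (1 - PowerSeries.X) ^ (k - j)
            * ((1 - PowerSeries.X) ^ 1 * (PowerSeries.invOneSubPow ℤ 1).val) := by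
          rw [h2, mul_one, hF, ← pow_add]
          congr 1
          omega
      _ = (1 - PowerSeries.X) ^ (m + j + 1)
            * ((1 - PowerSeries.X) ^ (k - j) * (PowerSeries.invOneSubPow ℤ 1).val) := by
          ring
  have hGc1 : ∀ q, (PowerSeries.coeff q) (PowerSeries.invOneSubPow ℤ 1).val = 1 := by
    intro q
    rw [show (1 : ℕ) = 0 + 1 from rfl, PowerSeries.invOneSubPow_val_succ_eq_mk_add_choose,
      PowerSeries.coeff_mk]
    simp
  have hRHS : (PowerSeries.coeff k) ((1 - PowerSeries.X) ^ (k - j)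
      * (PowerSeries.invOneSubPow ℤ 1).val) = if j = k then 1 else 0 := by
    rw [PowerSeries.coeff_mul, Finset.Nat.sum_antidiagonal_eq_sum_range_succ_mk]
    have : ∀ i ∈ Finset.range (k + 1),
        (PowerSeries.coeff (i, k - i).1) ((1 - PowerSeries.X : ℤ⟦X⟧) ^ (k - j))
          * (PowerSeries.coeff (i, k - i).2) (PowerSeries.invOneSubPow ℤ 1).val
        = (-1 : ℤ) ^ i * ((k - j).choose i) := by
      intro i _
      dsimp only
      rw [coeff_one_sub_pow, hGc1, mul_one]
    rw [Finset.sum_congr rfl this]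
    rw [← Finset.sum_subset (Finset.range_subset_range.2 (by omega : k - j + 1 ≤ k + 1))]
    · rw [Int.alternating_sum_range_choose]
      by_cases h : j = k
      · simp [h, Nat.sub_eq_zero_iff_le, hj]
      · rw [if_neg (by omega), if_neg h]
    · intro i hi hni
      have : k - j < i := by simp at hi hni ⊢; omega
      rw [Nat.choose_eq_zero_of_lt this]
      simp
  have hGc : ∀ q, (PowerSeries.coeff q) G = ((m + j + q).choose (m + j) : ℤ) := by
    intro q
    rw [hG, PowerSeries.invOneSubPow_val_succ_eq_mk_add_choose, PowerSeries.coeff_mk]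
  have hLHS : (PowerSeries.coeff k) (F * G)
      = ∑ i ∈ Finset.range (k + 1),
          (-1 : ℤ) ^ i * ((k + m).choose i : ℤ) * ((m + j + (k - i)).choose (m + j) : ℤ) := by
    rw [PowerSeries.coeff_mul, Finset.Nat.sum_antidiagonal_eq_sum_range_succ_mk]
    refine Finset.sum_congr rfl fun i _ => ?_
    dsimp only
    rw [hF, coeff_one_sub_pow, hGc]
  have hreflect : ∑ i ∈ Finset.range (k + 1),
        (-1 : ℤ) ^ i * ((k + m).choose i : ℤ) * ((m + j + (k - i)).choose (m + j) : ℤ)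
      = ∑ l ∈ Finset.range (k + 1),
          (-1 : ℤ) ^ (k - l) * ((k + m).choose (k - l) : ℤ) * ((m + j + l).choose (m + j) : ℤ) := by
    rw [← Finset.sum_range_reflect]
    refine Finset.sum_congr rfl fun l hl => ?_
    have hlk : l ≤ k := by simp at hl; omega
    have e1 : k + 1 - 1 - l = k - l := by omega
    have e2 : k - (k - l) = l := by omega
    rw [e1, e2]
  have hchoose : ∀ l, ((m + j + l).choose (m + j)) = ((m + j + l).choose l) := by
    intro l
    rw [← Nat.choose_symm (Nat.le_add_right (m + j) l)]
    congr 1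
    omega
  have hfinal : (PowerSeries.coeff k) (F * G)
      = (-1 : ℤ) ^ k * ∑ l ∈ Finset.range (k + 1),
          (-1 : ℤ) ^ l * ((k + m).choose (k - l)) * ((m + j + l).choose l) := by
    rw [hLHS, hreflect, Finset.mul_sum]
    refine Finset.sum_congr rfl fun l hl => ?_
    have hlk : l ≤ k := by simp at hl; omega
    have hsign : (-1 : ℤ) ^ (k - l) = (-1 : ℤ) ^ k * (-1 : ℤ) ^ l := by
      rw [← pow_add, show k + l = (k - l) + 2 * l by omega, pow_add, pow_mul]
      simp
    rw [hsign, hchoose l]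
    ring
  have hkey : (-1 : ℤ) ^ k * ∑ l ∈ Finset.range (k + 1),
      (-1 : ℤ) ^ l * ((k + m).choose (k - l)) * ((m + j + l).choose l)
      = if j = k then 1 else 0 := by
    rw [← hfinal, hprod, hRHS]
  have h2 : ((-1 : ℤ) ^ k) * ((-1 : ℤ) ^ k) = 1 := by
    rw [← pow_add]
    exact Even.neg_one_pow ⟨k, rfl⟩
  calc ∑ l ∈ Finset.range (k + 1),
        (-1 : ℤ) ^ l * ((k + m).choose (k - l)) * ((m + j + l).choose l)
      = ((-1 : ℤ) ^ k * (-1 : ℤ) ^ k) * ∑ l ∈ Finset.range (k + 1),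
          (-1 : ℤ) ^ l * ((k + m).choose (k - l)) * ((m + j + l).choose l) := by
        rw [h2, one_mul]
    _ = (-1 : ℤ) ^ k * ((-1 : ℤ) ^ k * ∑ l ∈ Finset.range (k + 1),
          (-1 : ℤ) ^ l * ((k + m).choose (k - l)) * ((m + j + l).choose l)) := by ring
    _ = (-1 : ℤ) ^ k * (if j = k then 1 else 0) := by rw [hkey]
    _ = if j = k then (-1) ^ k else 0 := by by_cases h : j = k <;> simp [h]


lemma integ_pow (p : ℕ) :
    IntegrableOn (fun s : ℝ => s ^ p * Real.exp (-s)) (Set.Ioi 0) := by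
  have h := Real.GammaIntegral_convergent (s := (p : ℝ) + 1) (by positivity)
  refine h.congr_fun ?_ measurableSet_Ioi
  intro x hx
  have hx0 : (0 : ℝ) < x := hx
  simp only
  rw [show (p : ℝ) + 1 - 1 = (p : ℝ) by ring, Real.rpow_natCast]
  ring

lemma val_pow (p : ℕ) :
    ∫ s in Set.Ioi (0 : ℝ), s ^ p * Real.exp (-s) = p.factorial := by
  have h1 := Real.Gamma_eq_integral (s := (p : ℝ) + 1) (by positivity)
  rw [Real.Gamma_nat_eq_factorial] at h1
  rw [h1]
  refine setIntegral_congr_fun measurableSet_Ioi fun x hx => ?_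
  have hx0 : (0 : ℝ) < x := hx
  show x ^ p * Real.exp (-x) = Real.exp (-x) * x ^ ((p : ℝ) + 1 - 1)
  rw [show (p : ℝ) + 1 - 1 = (p : ℝ) by ring, Real.rpow_natCast]
  ring

/-- The associated Laguerre polynomial of degree `k` with parameter `m`. -/
noncomputable def laguerre (m k : ℕ) (s : ℝ) : ℝ :=
  ∑ l ∈ Finset.range (k + 1),
    ((-1 : ℝ) ^ l / l.factorial) * ((k + m).choose (k - l)) * s ^ l

/-- orthogonality normalization
`∫_0^∞ s^m L^m_{n-1}(s)^2 e^{-s} ds = Γ(m+n)/(n-1)!`. -/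
theorem laguerre_norm (m n : ℕ) (hn : 1 ≤ n) :
    ∫ s in Set.Ioi (0 : ℝ), s ^ m * (laguerre m (n - 1) s) ^ 2 * Real.exp (-s)
      = Real.Gamma (m + n) / (n - 1).factorial := by
  obtain ⟨k, rfl⟩ : ∃ k, n = k + 1 := ⟨n - 1, by omega⟩
  simp only [Nat.add_sub_cancel]
  set c : ℕ → ℝ := fun l => (-1 : ℝ) ^ l / l.factorial * ((k + m).choose (k - l)) with hc
  have hlag : ∀ s : ℝ, laguerre m k s = ∑ l ∈ range (k + 1), c l * s ^ l := by
    intro s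
    rfl
  have hint : ∀ s : ℝ, s ^ m * (laguerre m k s) ^ 2 * Real.exp (-s)
      = ∑ l ∈ range (k + 1), ∑ l' ∈ range (k + 1),
          (c l * c l') * (s ^ (m + (l + l')) * Real.exp (-s)) := by
    intro s
    rw [hlag, sq, Finset.sum_mul_sum, Finset.mul_sum, Finset.sum_mul]
    refine Finset.sum_congr rfl fun l _ => ?_
    rw [Finset.mul_sum, Finset.sum_mul]
    refine Finset.sum_congr rfl fun l' _ => ?_
    rw [pow_add, pow_add]
    ring
  have inner : ∀ l' ∈ range (k + 1),
      ∑ l ∈ range (k + 1), (c l * c l') * ((m + (l + l')).factorial : ℝ)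
        = if l' = k then ((m + k).factorial : ℝ) / k.factorial else 0 := by
    intro l' hl'
    have hl'k : l' ≤ k := by simp at hl'; omega
    have hterm : ∀ l, (c l * c l') * ((m + (l + l')).factorial : ℝ)
        = c l' * ((m + l').factorial : ℝ)
          * (((-1 : ℤ) ^ l * ((k + m).choose (k - l)) * ((m + l' + l).choose l) : ℤ) : ℝ) := by
      intro l
      have hfact : ((m + l' + l).choose l) * (m + l').factorial * l.factorial
          = (m + l' + l).factorial := Nat.add_choose_mul_factorial_mul_factorial (m + l') l
      have hl0 : (l.factorial : ℝ) ≠ 0 := Nat.cast_ne_zero.2 l.factorial_ne_zero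
      have hexpand : ((m + (l + l')).factorial : ℝ)
          = ((m + l' + l).choose l : ℝ) * ((m + l').factorial : ℝ) * (l.factorial : ℝ) := by
        rw [show m + (l + l') = m + l' + l by omega]
        exact_mod_cast hfact.symm
      rw [hexpand, hc]
      push_cast
      field_simp
    rw [Finset.sum_congr rfl fun l _ => hterm l, ← Finset.mul_sum, ← Int.cast_sum,
      comb m k l' hl'k]
    by_cases h : l' = k
    · rw [h, if_pos rfl, if_pos rfl]
      simp only [hc, Nat.sub_self, Nat.choose_zero_right, Nat.cast_one, mul_one]
      have hk0 : (k.factorial : ℝ) ≠ 0 := Nat.cast_ne_zero.2 k.factorial_ne_zero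
      have hsq : ((-1 : ℝ) ^ k) * ((-1 : ℝ) ^ k) = 1 := by
        rw [← pow_add]
        exact Even.neg_one_pow ⟨k, rfl⟩
      push_cast
      field_simp
      linear_combination hsq
    · rw [if_neg h, if_neg h]
      simp
  calc ∫ s in Set.Ioi (0 : ℝ), s ^ m * (laguerre m k s) ^ 2 * Real.exp (-s)
      = ∫ s in Set.Ioi (0 : ℝ), ∑ l ∈ range (k + 1), ∑ l' ∈ range (k + 1),
          (c l * c l') * (s ^ (m + (l + l')) * Real.exp (-s)) :=
        setIntegral_congr_fun measurableSet_Ioi fun s _ => hint s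
    _ = ∑ l ∈ range (k + 1), ∑ l' ∈ range (k + 1),
          (c l * c l') * ((m + (l + l')).factorial : ℝ) := by
        rw [integral_finset_sum _ (fun l _ => integrable_finset_sum _
          (fun l' _ => ((integ_pow (m + (l + l'))).const_mul _)))]
        refine Finset.sum_congr rfl fun l _ => ?_
        rw [integral_finset_sum _ (fun l' _ => ((integ_pow (m + (l + l'))).const_mul _))]
        refine Finset.sum_congr rfl fun l' _ => ?_
        rw [MeasureTheory.integral_const_mul, val_pow]
    _ = ∑ l' ∈ range (k + 1), ∑ l ∈ range (k + 1),
          (c l * c l') * ((m + (l + l')).factorial : ℝ) := Finset.sum_comm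
    _ = ∑ l' ∈ range (k + 1), (if l' = k then ((m + k).factorial : ℝ) / k.factorial else 0) :=
        Finset.sum_congr rfl inner
    _ = ((m + k).factorial : ℝ) / k.factorial := by
        rw [Finset.sum_ite_eq' (range (k + 1)) k]
        simp
    _ = Real.Gamma (m + (k + 1 : ℕ)) / (k + 1 - 1).factorial := by
        rw [show ((m : ℝ) + ((k + 1 : ℕ) : ℝ)) = ((m + k : ℕ) : ℝ) + 1 by push_cast; ring,
          Real.Gamma_nat_eq_factorial]
        simp
end

section
/- Let b > 0, m ≥ 0 an integer, and let v be a twice differentiable function on (0, ∞). Then the function f(r) = r^m e^{-b r²/4} v(r) satisfies H_{m,b} f = (2n−1) b f on (0, ∞) if and only if v satisfies the ODE −r v''(r) + (b r² − 2m − 1) v'(r) − (2n−2) b r v(r) = 0 on (0, ∞). -/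
/-- The radial magnetic operator `H_{m,b} u = -u'' - u'/r + (m/r - br/2)^2 u`. -/
noncomputable def Hop (m : ℕ) (b : ℝ) (u : ℝ → ℝ) (r : ℝ) : ℝ :=
  -(deriv (deriv u) r) - deriv u r / r + ((m : ℝ) / r - b * r / 2) ^ 2 * u r

open Real Set


private lemma pow_deriv_aux (m : ℕ) {r : ℝ} (hr : r ≠ 0) :
    (m : ℝ) * r ^ (m - 1) = (m : ℝ) / r * r ^ m := by
  cases m with
  | zero => simp
  | succ k =>
    field_simp
    rw [pow_succ]
    ring_nf
    simp

private lemma expE (b : ℝ) (x : ℝ) :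
    HasDerivAt (fun x : ℝ => Real.exp (-b * x ^ 2 / 4))
      (-b * x / 2 * Real.exp (-b * x ^ 2 / 4)) x := by
  have h1 : HasDerivAt (fun x : ℝ => -b * x ^ 2 / 4) (-b * x / 2) x := by
    have := ((hasDerivAt_pow 2 x).const_mul (-b)).div_const 4
    refine this.congr_deriv ?_
    norm_num
    ring
  simpa [mul_comm] using h1.exp

private lemma key (m : ℕ) (b : ℝ) (v : ℝ → ℝ)
    (hv : DifferentiableOn ℝ v (Set.Ioi 0))
    (hv' : DifferentiableOn ℝ (deriv v) (Set.Ioi 0))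
    (lam : ℝ) {r : ℝ} (hr : 0 < r) :
    Hop m b (fun r : ℝ => r ^ m * Real.exp (-b * r ^ 2 / 4) * v r) r
      - lam * (r ^ m * Real.exp (-b * r ^ 2 / 4) * v r)
    = (r ^ m * Real.exp (-b * r ^ 2 / 4) / r) *
        (-r * deriv (deriv v) r + (b * r ^ 2 - 2 * (m : ℝ) - 1) * deriv v r
          - (lam - b) * r * v r) := by
  set E : ℝ → ℝ := fun x => Real.exp (-b * x ^ 2 / 4) with hEdef
  have hvr : ∀ x ∈ Ioi (0:ℝ), HasDerivAt v (deriv v x) x := fun x hx =>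
    ((hv x hx).differentiableAt (isOpen_Ioi.mem_nhds hx)).hasDerivAt
  have hv'r : ∀ x ∈ Ioi (0:ℝ), HasDerivAt (deriv v) (deriv (deriv v) x) x := fun x hx =>
    ((hv' x hx).differentiableAt (isOpen_Ioi.mem_nhds hx)).hasDerivAt
  have hg : ∀ x ∈ Ioi (0:ℝ), HasDerivAt (fun x : ℝ => x ^ m * E x)
      (((m:ℝ)/x - b*x/2) * (x ^ m * E x)) x := by
    intro x hx
    have := (hasDerivAt_pow m x).mul (expE b x)
    refine this.congr_deriv ?_
    rw [pow_deriv_aux m (ne_of_gt hx)]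
    ring
  set fd : ℝ → ℝ := fun x =>
    ((m:ℝ)/x - b*x/2) * (x ^ m * E x) * v x + (x ^ m * E x) * deriv v x with hfddef
  have hf : ∀ x ∈ Ioi (0:ℝ),
      HasDerivAt (fun x : ℝ => x ^ m * E x * v x) (fd x) x := fun x hx =>
    (hg x hx).mul (hvr x hx)
  have hdf : Set.EqOn (deriv (fun x : ℝ => x ^ m * E x * v x)) fd (Ioi 0) := fun x hx =>
    (hf x hx).deriv
  have hdfr : deriv (fun x : ℝ => x ^ m * E x * v x) r = fd r := hdf hr
  -- second derivative
  have hc : HasDerivAt (fun x : ℝ => (m:ℝ)/x - b*x/2) (-(m:ℝ)/r^2 - b/2) r := by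
    have h1 : HasDerivAt (fun x : ℝ => (m:ℝ)/x) ((m:ℝ) * (-(r^2)⁻¹)) r := by
      simpa [div_eq_mul_inv] using (hasDerivAt_inv (ne_of_gt hr)).const_mul (m:ℝ)
    have h2 : HasDerivAt (fun x : ℝ => b*x/2) (b/2) r := by
      simpa using ((hasDerivAt_id r).const_mul b).div_const 2
    refine (h1.sub h2).congr_deriv ?_
    field_simp
  have hfd : HasDerivAt fd
      (((-(m:ℝ)/r^2 - b/2) * (r ^ m * E r) +
          ((m:ℝ)/r - b*r/2) * (((m:ℝ)/r - b*r/2) * (r ^ m * E r))) * v r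
        + ((m:ℝ)/r - b*r/2) * (r ^ m * E r) * deriv v r
        + ((((m:ℝ)/r - b*r/2) * (r ^ m * E r)) * deriv v r
            + (r ^ m * E r) * deriv (deriv v) r)) r := by
    exact (((hc.mul (hg r hr)).mul (hvr r hr)).add ((hg r hr).mul (hv'r r hr)))
  have hdd : deriv (deriv (fun x : ℝ => x ^ m * E x * v x)) r =
      (((-(m:ℝ)/r^2 - b/2) * (r ^ m * E r) +
          ((m:ℝ)/r - b*r/2) * (((m:ℝ)/r - b*r/2) * (r ^ m * E r))) * v r
        + ((m:ℝ)/r - b*r/2) * (r ^ m * E r) * deriv v r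
        + ((((m:ℝ)/r - b*r/2) * (r ^ m * E r)) * deriv v r
            + (r ^ m * E r) * deriv (deriv v) r)) := by
    have heq : deriv (fun x : ℝ => x ^ m * E x * v x) =ᶠ[nhds r] fd :=
      Filter.eventuallyEq_of_mem (isOpen_Ioi.mem_nhds hr) hdf
    rw [heq.deriv_eq]
    exact hfd.deriv
  change Hop m b (fun x : ℝ => x ^ m * E x * v x) r - _ = _
  simp only [Hop, hdd, hdfr, hfddef]
  have hrne : r ≠ 0 := ne_of_gt hr
  simp only [hEdef]
  field_simp
  ring

/-- `f = r^m e^{-br²/4} v` satisfies `H_{m,b} f = (2n-1) b f` on `(0,∞)`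
iff `v` satisfies `-r v'' + (br² - 2m - 1) v' - (2n-2) b r v = 0` on `(0,∞)`. -/
theorem Hop_eigen_iff_ODE (m n : ℕ) (hn : 1 ≤ n) (b : ℝ) (hb : 0 < b) (v : ℝ → ℝ)
    (hv : DifferentiableOn ℝ v (Set.Ioi 0))
    (hv' : DifferentiableOn ℝ (deriv v) (Set.Ioi 0)) :
    (∀ r ∈ Set.Ioi (0 : ℝ),
        Hop m b (fun r : ℝ => r ^ m * Real.exp (-b * r ^ 2 / 4) * v r) r
          = (2 * (n : ℝ) - 1) * b * (r ^ m * Real.exp (-b * r ^ 2 / 4) * v r)) ↔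
    (∀ r ∈ Set.Ioi (0 : ℝ),
        -r * deriv (deriv v) r + (b * r ^ 2 - 2 * (m : ℝ) - 1) * deriv v r
          - (2 * (n : ℝ) - 2) * b * r * v r = 0) := by
  refine forall₂_congr fun r hr => ?_
  have hr' : (0:ℝ) < r := hr
  have hkey := key m b v hv hv' ((2 * (n : ℝ) - 1) * b) hr'
  have hK : r ^ m * Real.exp (-b * r ^ 2 / 4) / r ≠ 0 := by positivity
  constructor
  · intro h
    have h0 : (r ^ m * Real.exp (-b * r ^ 2 / 4) / r) *
        (-r * deriv (deriv v) r + (b * r ^ 2 - 2 * (m : ℝ) - 1) * deriv v r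
          - ((2 * (n : ℝ) - 1) * b - b) * r * v r) = 0 := by
      rw [← hkey, h]; ring
    have hC := (mul_eq_zero.mp h0).resolve_left hK
    linear_combination hC
  · intro h
    have h0 : Hop m b (fun r : ℝ => r ^ m * Real.exp (-b * r ^ 2 / 4) * v r) r
        - (2 * (n : ℝ) - 1) * b * (r ^ m * Real.exp (-b * r ^ 2 / 4) * v r) = 0 := by
      rw [hkey]
      linear_combination (r ^ m * Real.exp (-b * r ^ 2 / 4) / r) * h
    linarith [h0]
end

section
/- Let m ≥ 0, n ≥ 1 be integers, b > 0, and set v(r) = L^m_{n-1}(b r²/2), φ(r) = r^m e^{b r²/4}, g = φ v. Then H_{m,b} g = (2n − 2m − 3) b g − 2 b r v'(r) φ(r) on (0, ∞), where H_{m,b} u = −u'' − u'/r + (m/r − b r/2)² u. -/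
open Polynomial

noncomputable def lagP (m k : ℕ) : Polynomial ℝ :=
  ∑ l ∈ Finset.range (k+1), C ((-1:ℝ)^l / l.factorial * ((k+m).choose (k-l))) * X^l

lemma laguerre_eq (m k : ℕ) (s : ℝ) : laguerre m k s = (lagP m k).eval s := by
  rw [laguerre, lagP, Polynomial.eval_finset_sum]
  refine Finset.sum_congr rfl fun l _ => ?_
  simp [mul_assoc]

lemma lagP_coeff (m k j : ℕ) :
    (lagP m k).coeff j = if j ≤ k then (-1:ℝ)^j / j.factorial * ((k+m).choose (k-j)) else 0 := by
  rw [lagP, Polynomial.finset_sum_coeff]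
  simp only [coeff_C_mul, coeff_X_pow]
  simp [Finset.sum_ite_eq, Nat.lt_succ_iff]

lemma lag_rec (m k j : ℕ) (hj : j < k) :
    ((j:ℝ)+1) * ((j:ℝ)+(m:ℝ)+1) * ((-1:ℝ)^(j+1) / (j+1).factorial * ((k+m).choose (k-(j+1))))
      + ((k:ℝ)-(j:ℝ)) * ((-1:ℝ)^j / j.factorial * ((k+m).choose (k-j))) = 0 := by
  have hch : (k+m).choose (k-j-1+1) * (k-j-1+1) = (k+m).choose (k-j-1) * ((k+m) - (k-j-1)) :=
    Nat.choose_succ_right_eq _ _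
  have h1 : k - j - 1 + 1 = k - j := by omega
  have h2 : k + m - (k - j - 1) = m + j + 1 := by omega
  rw [h1, h2] at hch
  have hch' : ((k+m).choose (k-j) : ℝ) * ((k:ℝ)-(j:ℝ))
      = ((k+m).choose (k-j-1) : ℝ) * ((m:ℝ)+(j:ℝ)+1) := by
    have := congrArg (Nat.cast (R := ℝ)) hch
    push_cast at this
    rw [Nat.cast_sub hj.le] at this
    linarith [this]
  have hfac : ((j+1).factorial : ℝ) = ((j:ℝ)+1) * (j.factorial : ℝ) := by
    push_cast [Nat.factorial_succ]; ring
  have hf0 : (j.factorial : ℝ) ≠ 0 := Nat.cast_ne_zero.mpr j.factorial_ne_zero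
  have hsub : k - (j+1) = k - j - 1 := by omega
  rw [hsub, hfac, pow_succ]
  field_simp
  linear_combination ((-1:ℝ)^j) * hch'

lemma lagP_ode (m k : ℕ) :
    X * derivative (derivative (lagP m k)) + (C ((m:ℝ)+1) - X) * derivative (lagP m k)
      + C (k:ℝ) * lagP m k = 0 := by
  ext j
  simp only [coeff_add, coeff_zero, sub_mul, coeff_sub, coeff_C_mul]
  cases j with
  | zero =>
      simp only [mul_coeff_zero, coeff_X_zero, zero_mul, coeff_C_zero, coeff_derivative,
        lagP_coeff]
      by_cases hk : k = 0
      · subst hk; simp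
      · have h := lag_rec m k 0 (Nat.pos_of_ne_zero hk)
        have h1 : (1:ℕ) ≤ k := Nat.one_le_iff_ne_zero.mpr hk
        simp only [if_pos h1, if_pos (Nat.zero_le k)]
        norm_num at h ⊢
        linarith [h]
  | succ j =>
      simp only [coeff_X_mul, coeff_derivative, lagP_coeff]
      rcases Nat.lt_or_ge (j+1) k with hk | hk
      · have h := lag_rec m k (j+1) hk
        have h1 : j + 1 ≤ k := hk.le
        have h2 : j + 1 + 1 ≤ k := hk
        simp only [if_pos h1, if_pos h2]
        push_cast at h ⊢
        linarith [h]
      · rcases Nat.eq_or_lt_of_le hk with h' | h'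
        · have h1 : j + 1 ≤ k := by omega
          have h2 : ¬ (j + 1 + 1 ≤ k) := by omega
          simp only [if_pos h1, if_neg h2]
          push_cast
          have : (k:ℝ) = (j:ℝ) + 1 := by exact_mod_cast h'
          rw [this]; ring
        · have h1 : ¬ (j + 1 ≤ k) := by omega
          have h2 : ¬ (j + 1 + 1 ≤ k) := by omega
          simp only [if_neg h1, if_neg h2]
          ring

lemma hasDerivAt_F (a : ℕ) (Q : Polynomial ℝ) (b r : ℝ) :
    HasDerivAt (fun r : ℝ => r ^ a * Real.exp (b * r ^ 2 / 4) * Q.eval (b * r ^ 2 / 2))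
      ((a : ℝ) * r ^ (a - 1) * Real.exp (b * r ^ 2 / 4) * Q.eval (b * r ^ 2 / 2)
        + r ^ a * (b * r / 2 * Real.exp (b * r ^ 2 / 4)) * Q.eval (b * r ^ 2 / 2)
        + r ^ a * Real.exp (b * r ^ 2 / 4) * ((derivative Q).eval (b * r ^ 2 / 2) * (b * r))) r := by
  have h2 : HasDerivAt (fun r : ℝ => b * r ^ 2 / 4) (b * r / 2) r := by
    have := ((hasDerivAt_pow 2 r).const_mul b).div_const 4
    exact this.congr_deriv (by ring)
  have h3 : HasDerivAt (fun r : ℝ => b * r ^ 2 / 2) (b * r) r := by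
    have := ((hasDerivAt_pow 2 r).const_mul b).div_const 2
    exact this.congr_deriv (by ring)
  have hE : HasDerivAt (fun r : ℝ => Real.exp (b * r ^ 2 / 4))
      (b * r / 2 * Real.exp (b * r ^ 2 / 4)) r := by
    have := (Real.hasDerivAt_exp (b * r ^ 2 / 4)).comp r h2
    exact this.congr_deriv (by ring)
  have hQ : HasDerivAt (fun r : ℝ => Q.eval (b * r ^ 2 / 2))
      ((derivative Q).eval (b * r ^ 2 / 2) * (b * r)) r :=
    by have := (Q.hasDerivAt (b * r ^ 2 / 2)).comp r h3; exact this
  have := ((hasDerivAt_pow a r).mul hE).mul hQ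
  exact this.congr_deriv (by simp only [Pi.mul_apply]; ring)

lemma hasDerivAt_sq (b r : ℝ) : HasDerivAt (fun r : ℝ => b * r ^ 2 / 2) (b * r) r := by
  have := ((hasDerivAt_pow 2 r).const_mul b).div_const 2
  exact this.congr_deriv (by ring)

set_option maxHeartbeats 2000000 in
/-- with `v(r) = L^m_{n-1}(br²/2)`, `φ(r) = r^m e^{br²/4}` and `g = φ v`,
one has `H_{m,b} g = (2n - 2m - 3) b g - 2 b r v'(r) φ(r)` on `(0,∞)`. -/
theorem Hop_g (m n : ℕ) (hn : 1 ≤ n) (b : ℝ) (hb : 0 < b) :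
    ∀ r ∈ Set.Ioi (0 : ℝ),
      Hop m b
          (fun r : ℝ => r ^ m * Real.exp (b * r ^ 2 / 4) * laguerre m (n - 1) (b * r ^ 2 / 2)) r
        = (2 * (n : ℝ) - 2 * (m : ℝ) - 3) * b *
            (r ^ m * Real.exp (b * r ^ 2 / 4) * laguerre m (n - 1) (b * r ^ 2 / 2))
          - 2 * b * r * deriv (fun r : ℝ => laguerre m (n - 1) (b * r ^ 2 / 2)) r *
              (r ^ m * Real.exp (b * r ^ 2 / 4)) := by
  intro r hr
  have hr0 : (r : ℝ) ≠ 0 := ne_of_gt hr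
  have hb0 : b ≠ 0 := ne_of_gt hb
  simp only [laguerre_eq, Hop]
  set P : Polynomial ℝ := lagP m (n-1) with hPdef
  clear_value P
  -- first derivative of g
  have h1 : deriv (fun r : ℝ => r ^ m * Real.exp (b * r ^ 2 / 4) * P.eval (b * r ^ 2 / 2))
      = fun r : ℝ =>
        (m : ℝ) * (r ^ (m-1) * Real.exp (b * r ^ 2 / 4) * P.eval (b * r ^ 2 / 2))
        + (b/2) * (r ^ (m+1) * Real.exp (b * r ^ 2 / 4) * P.eval (b * r ^ 2 / 2))
        + b * (r ^ (m+1) * Real.exp (b * r ^ 2 / 4) * (derivative P).eval (b * r ^ 2 / 2)) := by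
    funext x
    rw [(hasDerivAt_F m P b x).deriv]
    ring
  -- second derivative
  have h2 : HasDerivAt (fun r : ℝ =>
        (m : ℝ) * (r ^ (m-1) * Real.exp (b * r ^ 2 / 4) * P.eval (b * r ^ 2 / 2))
        + (b/2) * (r ^ (m+1) * Real.exp (b * r ^ 2 / 4) * P.eval (b * r ^ 2 / 2))
        + b * (r ^ (m+1) * Real.exp (b * r ^ 2 / 4) * (derivative P).eval (b * r ^ 2 / 2)))
      ((m : ℝ) * (((m-1 : ℕ) : ℝ) * r ^ (m-1-1) * Real.exp (b * r ^ 2 / 4) * P.eval (b * r ^ 2 / 2)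
          + r ^ (m-1) * (b * r / 2 * Real.exp (b * r ^ 2 / 4)) * P.eval (b * r ^ 2 / 2)
          + r ^ (m-1) * Real.exp (b * r ^ 2 / 4) * ((derivative P).eval (b * r ^ 2 / 2) * (b * r)))
        + (b/2) * (((m+1 : ℕ) : ℝ) * r ^ (m+1-1) * Real.exp (b * r ^ 2 / 4) * P.eval (b * r ^ 2 / 2)
          + r ^ (m+1) * (b * r / 2 * Real.exp (b * r ^ 2 / 4)) * P.eval (b * r ^ 2 / 2)
          + r ^ (m+1) * Real.exp (b * r ^ 2 / 4) * ((derivative P).eval (b * r ^ 2 / 2) * (b * r)))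
        + b * (((m+1 : ℕ) : ℝ) * r ^ (m+1-1) * Real.exp (b * r ^ 2 / 4) * (derivative P).eval (b * r ^ 2 / 2)
          + r ^ (m+1) * (b * r / 2 * Real.exp (b * r ^ 2 / 4)) * (derivative P).eval (b * r ^ 2 / 2)
          + r ^ (m+1) * Real.exp (b * r ^ 2 / 4) * ((derivative (derivative P)).eval (b * r ^ 2 / 2) * (b * r)))) r :=
    (((hasDerivAt_F (m-1) P b r).const_mul (m:ℝ)).add
      ((hasDerivAt_F (m+1) P b r).const_mul (b/2))).add
      ((hasDerivAt_F (m+1) (derivative P) b r).const_mul b)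
  have hv : HasDerivAt (fun r : ℝ => P.eval (b * r ^ 2 / 2))
      ((derivative P).eval (b * r ^ 2 / 2) * (b * r)) r :=
    by have := (P.hasDerivAt (b * r ^ 2 / 2)).comp r (hasDerivAt_sq b r); exact this
  rw [h1, h2.deriv, hv.deriv]
  beta_reduce
  -- the ODE at the point s = b r^2 / 2
  have hODE : (b * r ^ 2 / 2) * (derivative (derivative P)).eval (b * r ^ 2 / 2)
      + ((m:ℝ) + 1 - b * r ^ 2 / 2) * (derivative P).eval (b * r ^ 2 / 2)
      + ((n-1 : ℕ) : ℝ) * P.eval (b * r ^ 2 / 2) = 0 := by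
    have := congrArg (eval (b * r ^ 2 / 2)) (lagP_ode m (n-1))
    rw [← hPdef] at this
    simpa [eval_mul, eval_add, eval_sub] using this
  have hcast : ((n-1 : ℕ) : ℝ) = (n:ℝ) - 1 := by
    rw [Nat.cast_sub hn]; norm_num
  rw [hcast] at hODE
  -- solve for the second derivative value
  have hP2 : (derivative (derivative P)).eval (b * r ^ 2 / 2)
      = (((b * r ^ 2 / 2) - (m:ℝ) - 1) * (derivative P).eval (b * r ^ 2 / 2)
          - ((n:ℝ) - 1) * P.eval (b * r ^ 2 / 2)) / (b * r ^ 2 / 2) := by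
    field_simp
    linarith [hODE]
  rw [hP2]
  generalize eval (b * r ^ 2 / 2) P = Pv at *
  generalize eval (b * r ^ 2 / 2) (derivative P) = P1 at *
  generalize Real.exp (b * r ^ 2 / 4) = Ev at *
  clear h1 h2 hv hODE hP2 hPdef hcast P hn hb hr
  rcases m with _ | _ | m
  · push_cast; field_simp; ring
  · push_cast; field_simp; ring
  · push_cast; field_simp; ring
end
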